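/- Let J_∞ ⊆ P be the ideal generated by {Dⁱ(g₁) : i ≥ 0} ∪ {Dⁱ(g₂) : i ≥ 0}, where g₁ = w⁽⁰⁾(w⁽⁰⁾ − (ℓ⁽⁰⁾)²) and g₂ = (ℓ⁽⁰⁾)³w⁽⁰⁾. Let r = ℓ⁽⁰⁾ℓ⁽²⁾w⁽⁰⁾ + (ℓ⁽¹⁾)²w⁽⁰⁾ − (1/2)(ℓ⁽⁰⁾)²w⁽²⁾ ∈ P. Then r³ ∈ J_∞. -/
import Mathlib

open MvPolynomial

noncomputable section

/-- The polynomial ring `P = ℂ[ℓ⁽⁰⁾, ℓ⁽¹⁾, …, w⁽⁰⁾, w⁽¹⁾, …]`: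
variables are indexed by `Fin 2 × ℕ`, where `(0, i)` is `ℓ⁽ⁱ⁾` and `(1, i)` is `w⁽ⁱ⁾`. -/
abbrev P : Type := MvPolynomial (Fin 2 × ℕ) ℂ

/-- The unique ℂ-linear derivation `D : P → P` with `D(ℓ⁽ⁱ⁾) = ℓ⁽ⁱ⁺¹⁾`, `D(w⁽ⁱ⁾) = w⁽ⁱ⁺¹⁾`. -/
def D : Derivation ℂ P P :=
  MvPolynomial.mkDerivation ℂ (fun p : Fin 2 × ℕ => (X (p.1, p.2 + 1) : P))

/-- `ℓ⁽ⁱ⁾` -/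
def lv (i : ℕ) : P := X (0, i)

/-- `w⁽ⁱ⁾` -/
def wv (i : ℕ) : P := X (1, i)

/-- `g₁ = w⁽⁰⁾(w⁽⁰⁾ − (ℓ⁽⁰⁾)²)`. -/
def g₁ : P := wv 0 * (wv 0 - lv 0 ^ 2)

/-- `g₂ = (ℓ⁽⁰⁾)³w⁽⁰⁾`. -/
def g₂ : P := lv 0 ^ 3 * wv 0

/-- The ideal `J_∞` generated by all `Dⁱ(g₁)` and `Dⁱ(g₂)`, `i ≥ 0`. -/
def Jinf : Ideal P :=
  Ideal.span ((Set.range fun i : ℕ => (⇑D)^[i] g₁) ∪ (Set.range fun i : ℕ => (⇑D)^[i] g₂))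

/-- `r = ℓ⁽⁰⁾ℓ⁽²⁾w⁽⁰⁾ + (ℓ⁽¹⁾)²w⁽⁰⁾ − (1/2)(ℓ⁽⁰⁾)²w⁽²⁾`. -/
def r : P := lv 0 * lv 2 * wv 0 + lv 1 ^ 2 * wv 0 - C ((1 : ℂ)/2) * lv 0 ^ 2 * wv 2

lemma hDl' : ∀ i, D (lv i) = lv (i+1) := fun i => by
  unfold D lv; exact MvPolynomial.mkDerivation_X ℂ _ (0, i)

lemma hDw' : ∀ i, D (wv i) = wv (i+1) := fun i => by
  unfold D wv; exact MvPolynomial.mkDerivation_X ℂ _ (1, i)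

lemma hmul' : ∀ a b : P, D (a * b) = a * D b + b * D a := fun a b => by
  rw [Derivation.leibniz]; simp [smul_eq_mul]

lemma h1' : (⇑D)^[1] g₁ = wv 0 * wv 1 + wv 0 * wv 1 - wv 1 * (lv 0 * lv 0)
    - wv 0 * (lv 0 * lv 1) - wv 0 * (lv 0 * lv 1) := by
  rw [Function.iterate_one,
    show g₁ = wv 0 * wv 0 - wv 0 * (lv 0 * lv 0) by unfold g₁; ring]
  simp only [map_sub, map_add, hmul', hDl', hDw']; ring

lemma h2' : (⇑D)^[2] g₁ = 2 * wv 1 ^ 2 + 2 * (wv 0 * wv 2) - wv 2 * lv 0 ^ 2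
    - 4 * (wv 1 * lv 0 * lv 1) - 2 * (wv 0 * lv 1 ^ 2) - 2 * (wv 0 * lv 0 * lv 2) := by
  rw [Function.iterate_succ_apply', h1']
  simp only [map_sub, map_add, hmul', hDl', hDw']; ring

lemma k2' : (⇑D)^[2] g₂ = 6 * (lv 0 * lv 1 ^ 2 * wv 0) + 3 * (lv 0 ^ 2 * lv 2 * wv 0)
    + 6 * (lv 0 ^ 2 * lv 1 * wv 1) + lv 0 ^ 3 * wv 2 := by
  have f1 : (⇑D)^[1] g₂ = lv 1 * (lv 0 * (lv 0 * wv 0)) + lv 1 * (lv 0 * (lv 0 * wv 0))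
      + lv 1 * (lv 0 * (lv 0 * wv 0)) + lv 0 * (lv 0 * (lv 0 * wv 1)) := by
    rw [Function.iterate_one,
      show g₂ = lv 0 * (lv 0 * (lv 0 * wv 0)) by unfold g₂; ring]
    simp only [map_add, hmul', hDl', hDw']; ring
  rw [Function.iterate_succ_apply', f1]
  simp only [map_add, hmul', hDl', hDw']; ring

def Sp : P := 2 * (lv 0 * lv 2 * wv 0) + 2 * (lv 1 ^ 2 * wv 0) - lv 0 ^ 2 * wv 2

lemma hs' : 2 * r = Sp := by
  have hC : (2 : P) * C ((1 : ℂ)/2) = 1 := by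
    rw [show (2 : P) = C (2 : ℂ) from (map_ofNat C 2).symm, ← C_mul]
    norm_num
  unfold r Sp; linear_combination (-(lv 0 ^ 2 * wv 2)) * hC

set_option maxHeartbeats 2000000 in
lemma key' : (1336 : P) * Sp ^ 3
    = ((-79424 : P) * (lv 1 * lv 2 * wv 1 ^ 3) + (3328 : P) * (lv 1 ^ 2 * wv 1 ^ 2 * wv 2) + (24064 : P) * (lv 1 ^ 4 * wv 1 ^ 2) + (10688 : P) * (lv 1 ^ 6 * wv 0) + (15616 : P) * (lv 0 * lv 2 * wv 1 ^ 2 * wv 2) + (-6080 : P) * (lv 0 * lv 1 * wv 1 * wv 2 ^ 2) + (152896 : P) * (lv 0 * lv 1 ^ 2 * lv 2 * wv 1 ^ 2) + (-4160 : P) * (lv 0 * lv 1 ^ 3 * wv 1 * wv 2) + (32064 : P) * (lv 0 * lv 1 ^ 4 * lv 2 * wv 0) + (-13376 : P) * (lv 0 * lv 1 ^ 5 * wv 1) + (6496 : P) * (lv 0 ^ 2 * wv 2 ^ 3) + (-32896 : P) * (lv 0 ^ 2 * lv 2 ^ 2 * wv 1 ^ 2) + (-14784 : P) * (lv 0 ^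 2 * lv 1 * lv 2 * wv 1 * wv 2) + (-416 : P) * (lv 0 ^ 2 * lv 1 ^ 2 * wv 2 ^ 2) + (32064 : P) * (lv 0 ^ 2 * lv 1 ^ 2 * lv 2 ^ 2 * wv 0) + (-36928 : P) * (lv 0 ^ 2 * lv 1 ^ 3 * lv 2 * wv 1) + (-15200 : P) * (lv 0 ^ 2 * lv 1 ^ 4 * wv 2) + (-14304 : P) * (lv 0 ^ 3 * lv 2 * wv 2 ^ 2) + (10688 : P) * (lv 0 ^ 3 * lv 2 ^ 3 * wv 0) + (55424 : P) * (lv 0 ^ 3 * lv 1 * lv 2 ^ 2 * wv 1) + (-25088 : P) * (lv 0 ^ 3 * lv 1 ^ 2 * lv 2 * wv 2) + (-4480 : P) * (lv 0 ^ 3 * lv 1 ^ 4 * lv 2) + (3616 : P) * (lv 0 ^ 4 * lv 2 ^ 2 * wv 2) + (-2304 : P) * (lv 0 ^ 4 * lv 1 ^ 2 * lv 2 ^ 2) + (-1152 : P) * (lv 0 ^ 5 * lv 2 ^ 3)) * g₁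
    + ((39712 : P) * (lv 1 * lv 2 * wv 0 * wv 1 ^ 2) + (-1664 : P) * (lv 1 ^ 2 * wv 0 * wv 1 * wv 2) + (-12032 : P) * (lv 1 ^ 4 * wv 0 * wv 1) + (-7808 : P) * (lv 0 * lv 2 * wv 0 * wv 1 * wv 2) + (3040 : P) * (lv 0 * lv 1 * wv 0 * wv 2 ^ 2) + (-36736 : P) * (lv 0 * lv 1 ^ 2 * lv 2 * wv 0 * wv 1) + (-1248 : P) * (lv 0 * lv 1 ^ 3 * wv 1 ^ 2) + (416 : P) * (lv 0 * lv 1 ^ 3 * wv 0 * wv 2) + (-5344 : P) * (lv 0 * lv 1 ^ 5 * wv 0) + (3248 : P) * (lv 0 ^ 2 * wv 1 * wv 2 ^ 2) + (16448 : P) * (lv 0 ^ 2 * lv 2 ^ 2 * wv 0 * wv 1) + (-20480 : P) * (lv 0 ^ 2 * lv 1 * lv 2 * wv 1 ^ 2) + (-416 : P) * (lv 0 ^ 2 * lv 1 * lv 2 * wv 0 * wv 2) + (2080 : P) * (lv 0 ^ 2 * lv 1 ^ 2 * wv 1 * wv 2) + (-18272 : P) * (lv 0 ^ 2 * lv 1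 ^ 3 * lv 2 * wv 0) + (3520 : P) * (lv 0 ^ 2 * lv 1 ^ 4 * wv 1) + (-4560 : P) * (lv 0 ^ 3 * lv 1 * wv 2 ^ 2) + (-11264 : P) * (lv 0 ^ 3 * lv 1 * lv 2 ^ 2 * wv 0) + (36352 : P) * (lv 0 ^ 3 * lv 1 ^ 2 * lv 2 * wv 1) + (3120 : P) * (lv 0 ^ 3 * lv 1 ^ 3 * wv 2) + (-8960 : P) * (lv 0 ^ 3 * lv 1 ^ 5) + (-2304 : P) * (lv 0 ^ 4 * lv 2 ^ 2 * wv 1) + (10240 : P) * (lv 0 ^ 4 * lv 1 * lv 2 * wv 2) + (-4608 : P) * (lv 0 ^ 4 * lv 1 ^ 3 * lv 2) + (-2304 : P) * (lv 0 ^ 5 * lv 1 * lv 2 ^ 2)) * ((⇑D)^[1] g₁)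
    + ((-3248 : P) * (lv 0 ^ 2 * wv 0 * wv 2 ^ 2) + (-1248 : P) * (lv 0 ^ 2 * lv 1 ^ 2 * wv 1 ^ 2) + (3904 : P) * (lv 0 ^ 3 * lv 2 * wv 0 * wv 2) + (-208 : P) * (lv 0 ^ 3 * lv 1 * wv 1 * wv 2) + (-3120 : P) * (lv 0 ^ 3 * lv 1 ^ 3 * wv 1) + (1624 : P) * (lv 0 ^ 4 * wv 2 ^ 2) + (-5920 : P) * (lv 0 ^ 4 * lv 2 ^ 2 * wv 0) + (-10240 : P) * (lv 0 ^ 4 * lv 1 * lv 2 * wv 1) + (-4480 : P) * (lv 0 ^ 4 * lv 1 ^ 4) + (-2304 : P) * (lv 0 ^ 5 * lv 1 ^ 2 * lv 2) + (-1152 : P) * (lv 0 ^ 6 * lv 2 ^ 2)) * ((⇑D)^[2] g₁)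
    + ((416 : P) * (lv 1 * wv 1 ^ 3) + (288 : P) * (lv 0 ^ 3 * wv 2 ^ 2) + (-4480 : P) * (lv 0 ^ 3 * lv 1 ^ 4) + (-2304 : P) * (lv 0 ^ 4 * lv 1 ^ 2 * lv 2) + (-1152 : P) * (lv 0 ^ 5 * lv 2 ^ 2)) * ((⇑D)^[2] g₂) := by
  rw [h1', h2', k2']; unfold Sp g₁; ring

theorem r_cubed_mem_Jinf : r ^ 3 ∈ Jinf := by
  have m0 : g₁ ∈ Jinf := Ideal.subset_span (Set.mem_union_left _ ⟨0, rfl⟩)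
  have m1 : (⇑D)^[1] g₁ ∈ Jinf := Ideal.subset_span (Set.mem_union_left _ ⟨1, rfl⟩)
  have m2 : (⇑D)^[2] g₁ ∈ Jinf := Ideal.subset_span (Set.mem_union_left _ ⟨2, rfl⟩)
  have n2 : (⇑D)^[2] g₂ ∈ Jinf := Ideal.subset_span (Set.mem_union_right _ ⟨2, rfl⟩)
  have mem : (10688 : P) * r ^ 3 ∈ Jinf := by
    have e : (10688 : P) * r ^ 3 = (1336 : P) * Sp ^ 3 := by rw [← hs']; ring
    rw [e, key']
    exact Ideal.add_mem _ (Ideal.add_mem _ (Ideal.add_mem _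
      (Ideal.mul_mem_left _ _ m0) (Ideal.mul_mem_left _ _ m1))
      (Ideal.mul_mem_left _ _ m2)) (Ideal.mul_mem_left _ _ n2)
  have hfin : C ((10688 : ℂ)⁻¹) * ((10688 : P) * r ^ 3) = r ^ 3 := by
    rw [show (10688 : P) = C (10688 : ℂ) from (map_ofNat C 10688).symm, ← mul_assoc, ← C_mul,
      inv_mul_cancel₀ (by norm_num : (10688 : ℂ) ≠ 0), C_1, one_mul]
  rw [← hfin]
  exact Ideal.mul_mem_left _ _ mem
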